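/- Let n be coprime to 6 with n > 8. Then ind((1)(n−3)(n−2)(4)) = 1, i.e., there exists a unit g of Z/n with (g mod n) + ((n−3)g mod n) + ((n−2)g mod n) + (4g mod n) = n. -/

import Mathlib

/-- `S = (x1)(x2)(x3)(x4)` is a minimal zero-sum sequence over `ℤ/n`:
all entries lie in `[1, n)`, the total sum is `≡ 0 (mod n)`, and no proper
nonempty subsequence sums to `0 (mod n)`. -/
def IsMinZS4 (n x1 x2 x3 x4 : ℕ) : Prop :=
  (1 ≤ x1 ∧ x1 < n) ∧ (1 ≤ x2 ∧ x2 < n) ∧ (1 ≤ x3 ∧ x3 < n) ∧ (1 ≤ x4 ∧ x4 < n) ∧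
  (x1 + x2 + x3 + x4) % n = 0 ∧
  (x1 + x2) % n ≠ 0 ∧ (x1 + x3) % n ≠ 0 ∧ (x1 + x4) % n ≠ 0 ∧
  (x2 + x3) % n ≠ 0 ∧ (x2 + x4) % n ≠ 0 ∧ (x3 + x4) % n ≠ 0 ∧
  (x1 + x2 + x3) % n ≠ 0 ∧ (x1 + x2 + x4) % n ≠ 0 ∧
  (x1 + x3 + x4) % n ≠ 0 ∧ (x2 + x3 + x4) % n ≠ 0

/-- Sum of least nonnegative residues of the `g·xᵢ` mod `n`;
this equals `n·‖S‖_{g⁻¹}` for a unit `g` of `ℤ/n`. -/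
def normSum (n g x1 x2 x3 x4 : ℕ) : ℕ :=
  (x1 * g) % n + (x2 * g) % n + (x3 * g) % n + (x4 * g) % n

/-- The index of `S`: the minimum of `‖S‖_g` over generators `g` of `ℤ/n`. -/
noncomputable def seqIndex (n x1 x2 x3 x4 : ℕ) : ℕ :=
  sInf {m : ℕ | ∃ g, g < n ∧ Nat.Coprime g n ∧ normSum n g x1 x2 x3 x4 = m * n}

/-- `k` is good: `k` is a power of `2`, `k < n/6`, and
`F(k) = (2n − 2 − 2⌊((3k−1)/(3k))·n⌋)·k > (n−1)/2`. -/
def IsGood (n k : ℕ) : Prop :=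
  (∃ l, k = 2 ^ l) ∧ 6 * k < n ∧
    (n - 1) / 2 < (2 * n - 2 - 2 * ((3 * k - 1) * n / (3 * k))) * k

/-!
Take `g = ⌊n/3⌋` and write `n = 3g + r` with `r ∈ {1, 2}`. Then the residues of
`g, (n-3)g, (n-2)g, 4g` mod `n` are `g, r, g + r, g - r`, which add up to `3g + r = n`.
Any common divisor of `g` and `n` divides `r`, hence `6`, so `g` is a unit; and the index
is never `0`, because the residue of `1 · g` alone is already nonzero.
-/

lemma mul_mod_ne_zero_of_coprime {n g x : ℕ} (hx : 0 < x) (hxn : x < n)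
    (hg : Nat.Coprime g n) : x * g % n ≠ 0 := fun h =>
  Nat.not_dvd_of_pos_of_lt hx hxn
    (hg.symm.dvd_of_dvd_mul_right (Nat.dvd_of_mod_eq_zero h))

lemma seqIndex_eq_one {n g x1 x2 x3 x4 : ℕ} (hx1 : 0 < x1) (hx1n : x1 < n) (hgn : g < n)
    (hg : Nat.Coprime g n) (hsum : normSum n g x1 x2 x3 x4 = n) :
    seqIndex n x1 x2 x3 x4 = 1 := by
  have hmem : 1 ∈ {m : ℕ | ∃ g, g < n ∧ Nat.Coprime g n ∧ normSum n g x1 x2 x3 x4 = m * n} :=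
    ⟨g, hgn, hg, by rw [hsum, one_mul]⟩
  refine le_antisymm (Nat.sInf_le hmem) (le_csInf ⟨1, hmem⟩ ?_)
  rintro m ⟨g', -, hg', hm⟩
  refine Nat.pos_of_ne_zero fun hm0 => mul_mod_ne_zero_of_coprime hx1 hx1n hg' ?_
  rw [hm0, zero_mul] at hm
  unfold normSum at hm
  omega

lemma coprime_div_self_of_mod_dvd {n k m : ℕ} (hm : Nat.Coprime n m) (hk : n % k ∣ m) :
    Nat.Coprime (n / k) n := by
  have hdn : Nat.gcd (n / k) n ∣ n := Nat.gcd_dvd_right _ _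
  have hdk : Nat.gcd (n / k) n ∣ n % k := by
    rw [Nat.mod_eq_sub_mul_div]
    exact Nat.dvd_sub hdn ((Nat.gcd_dvd_left _ _).mul_left k)
  exact Nat.eq_one_of_dvd_coprimes hm hdn (hdk.trans hk)

-- `n / 3 = p + 1` and `n - 3 = 3p + r` are written out so that no truncated subtraction occurs.
lemma normSum_three_mul_add (p r : ℕ) (hr : r ≤ p + 1) :
    normSum (3 * p + 3 + r) (p + 1) 1 (3 * p + r) (3 * p + r + 1) 4 = 3 * p + 3 + r := by
  have h2 : (3 * p + r) * (p + 1) = r + p * (3 * p + 3 + r) := by ring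
  have h3 : (3 * p + r + 1) * (p + 1) = (p + 1 + r) + p * (3 * p + 3 + r) := by ring
  have h4 : 4 * (p + 1) = (p + 1 - r) + 1 * (3 * p + 3 + r) := by omega
  unfold normSum
  rw [h2, h3, h4, Nat.add_mul_mod_self_right, Nat.add_mul_mod_self_right,
    Nat.add_mul_mod_self_right, Nat.mod_eq_of_lt (by omega : r < 3 * p + 3 + r),
    Nat.mod_eq_of_lt (by omega : p + 1 + r < 3 * p + 3 + r),
    Nat.mod_eq_of_lt (by omega : p + 1 - r < 3 * p + 3 + r),
    Nat.mod_eq_of_lt (by omega : 1 * (p + 1) < 3 * p + 3 + r)]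
  omega

lemma normSum_div_three {n : ℕ} (hn : 3 ≤ n) (hr : n % 3 ≤ n / 3) :
    normSum n (n / 3) 1 (n - 3) (n - 2) 4 = n := by
  have key := normSum_three_mul_add (n / 3 - 1) (n % 3) (by omega)
  rwa [show 3 * (n / 3 - 1) + 3 + n % 3 = n by omega, show n / 3 - 1 + 1 = n / 3 by omega,
    show 3 * (n / 3 - 1) + n % 3 + 1 = n - 2 by omega,
    show 3 * (n / 3 - 1) + n % 3 = n - 3 by omega] at key

theorem stmt_15 (n : ℕ) (hn : 8 < n) (h6 : Nat.Coprime n 6) :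
    seqIndex n 1 (n - 3) (n - 2) 4 = 1 ∧
    ∃ g : ℕ, Nat.Coprime g n ∧
      g % n + ((n - 3) * g) % n + ((n - 2) * g) % n + (4 * g) % n = n := by
  have h3 : ¬ 3 ∣ n :=
    (Nat.prime_three.coprime_iff_not_dvd).1 (h6.coprime_dvd_right ⟨2, rfl⟩).symm
  have hmod : n % 3 ∣ 6 := by
    rcases (by omega : n % 3 = 1 ∨ n % 3 = 2) with h | h <;> rw [h] <;> norm_num
  have hcop : Nat.Coprime (n / 3) n := coprime_div_self_of_mod_dvd h6 hmod
  have hsum : normSum n (n / 3) 1 (n - 3) (n - 2) 4 = n := normSum_div_three (by omega) (by omega)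
  refine ⟨seqIndex_eq_one one_pos (by omega) (by omega) hcop hsum, n / 3, hcop, ?_⟩
  simpa only [normSum, one_mul] using hsum
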